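/- Let G be an edge-colored complete graph K_n. Then G contains no properly colored 4-cycle if and only if every single color class and every union of two color classes is a threshold graph. -/

import Mathlib

open SimpleGraph Finset

/-- Number of edges of `G`. -/
noncomputable def eCount {V : Type*} (G : SimpleGraph V) : ℕ := G.edgeSet.ncard

/-- Number of distinct colors appearing on edges of `G` under coloring `χ`. -/
noncomputable def cCount {V : Type*} (G : SimpleGraph V) (χ : Sym2 V → ℕ) : ℕ := (χ '' G.edgeSet).ncard

/-- Color degree of `v`: number of distinct colors on edges incident to `v`. -/
noncomputable def colorDeg {V : Type*} (G : SimpleGraph V) (χ : Sym2 V → ℕ) (v : V) : ℕ :=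
  ((fun u => χ s(v, u)) '' G.neighborSet v).ncard

/-- `G` with coloring `χ` contains a rainbow triangle. -/
def HasRainbowTriangle {V : Type*} (G : SimpleGraph V) (χ : Sym2 V → ℕ) : Prop :=
  ∃ a b c : V, G.Adj a b ∧ G.Adj b c ∧ G.Adj a c ∧
    χ s(a, b) ≠ χ s(b, c) ∧ χ s(b, c) ≠ χ s(a, c) ∧ χ s(a, b) ≠ χ s(a, c)

/-- `G` with coloring `χ` contains a properly colored 4-cycle. -/
def HasPCC4 {V : Type*} (G : SimpleGraph V) (χ : Sym2 V → ℕ) : Prop :=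
  ∃ a b c d : V, a ≠ c ∧ b ≠ d ∧ G.Adj a b ∧ G.Adj b c ∧ G.Adj c d ∧ G.Adj d a ∧
    χ s(a, b) ≠ χ s(b, c) ∧ χ s(b, c) ≠ χ s(c, d) ∧
    χ s(c, d) ≠ χ s(d, a) ∧ χ s(d, a) ≠ χ s(a, b)

/-- The color class of color `i`: the spanning subgraph of edges colored `i`. -/
def colorClass {V : Type*} (G : SimpleGraph V) (χ : Sym2 V → ℕ) (i : ℕ) : SimpleGraph V where
  Adj u v := G.Adj u v ∧ χ s(u, v) = i
  symm := by
    constructor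
    intro u v h
    exact ⟨h.1.symm, by rw [Sym2.eq_swap]; exact h.2⟩
  loopless := ⟨fun u h => G.irrefl h.1⟩

/-- A threshold graph: no induced `2K₂`, `P₄`, or `C₄`. -/
def IsThreshold {V : Type*} (G : SimpleGraph V) : Prop :=
  (¬ ∃ a b c d : V, a ≠ c ∧ a ≠ d ∧ b ≠ c ∧ b ≠ d ∧ G.Adj a b ∧ G.Adj c d ∧
      ¬ G.Adj a c ∧ ¬ G.Adj a d ∧ ¬ G.Adj b c ∧ ¬ G.Adj b d) ∧
  (¬ ∃ a b c d : V, a ≠ c ∧ a ≠ d ∧ b ≠ d ∧ G.Adj a b ∧ G.Adj b c ∧ G.Adj c d ∧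
      ¬ G.Adj a c ∧ ¬ G.Adj a d ∧ ¬ G.Adj b d) ∧
  (¬ ∃ a b c d : V, a ≠ c ∧ b ≠ d ∧ G.Adj a b ∧ G.Adj b c ∧ G.Adj c d ∧ G.Adj d a ∧
      ¬ G.Adj a c ∧ ¬ G.Adj b d)

lemma swapχ {V : Type*} (χ : Sym2 V → ℕ) (u v : V) : χ s(u,v) = χ s(v,u) := by
  rw [Sym2.eq_swap]

lemma unionAdj {V : Type*} (χ : Sym2 V → ℕ) (i j : ℕ) (u v : V) :
    (colorClass (⊤ : SimpleGraph V) χ i ⊔ colorClass (⊤ : SimpleGraph V) χ j).Adj u v ↔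
      u ≠ v ∧ (χ s(u,v) = i ∨ χ s(u,v) = j) := by
  show ((⊤:SimpleGraph V).Adj u v ∧ χ s(u,v) = i) ∨ ((⊤:SimpleGraph V).Adj u v ∧ χ s(u,v) = j) ↔ _
  simp only [top_adj]
  tauto

lemma keyPCC4 {V : Type*} (χ : Sym2 V → ℕ) (i j : ℕ)
    (a b c d : V) (hab : a ≠ b) (hac : a ≠ c) (had : a ≠ d) (hbc : b ≠ c)
    (hbd : b ≠ d) (hcd : c ≠ d)
    (h1 : χ s(a,b) = i ∨ χ s(a,b) = j)
    (h2 : χ s(c,d) = i ∨ χ s(c,d) = j)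
    (h3 : ¬(χ s(a,c) = i ∨ χ s(a,c) = j))
    (h4 : ¬(χ s(b,d) = i ∨ χ s(b,d) = j)) :
    HasPCC4 (⊤ : SimpleGraph V) χ := by
  refine ⟨a, b, d, c, had, hbc, (top_adj a b).2 hab, (top_adj b d).2 hbd, (top_adj d c).2 hcd.symm,
    (top_adj c a).2 hac.symm, ?_, ?_, ?_, ?_⟩
  · intro h; exact h4 (h ▸ h1)
  · rw [← swapχ χ c d]; intro h; exact h4 (h.symm ▸ h2)
  · rw [← swapχ χ c d, ← swapχ χ a c]; intro h; exact h3 (h ▸ h2)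
  · rw [← swapχ χ a c]; intro h; exact h3 (h.symm ▸ h1)

/-- An edge-colored complete graph has no properly colored `C₄` iff every color class
and every union of two color classes is a threshold graph. -/
theorem stmt_17 {V : Type*} (χ : Sym2 V → ℕ) :
    ¬ HasPCC4 (⊤ : SimpleGraph V) χ ↔
      (∀ i : ℕ, IsThreshold (colorClass (⊤ : SimpleGraph V) χ i)) ∧
      (∀ i j : ℕ, IsThreshold
        (colorClass (⊤ : SimpleGraph V) χ i ⊔ colorClass (⊤ : SimpleGraph V) χ j)) := by
  constructor
  · intro hn
    have main : ∀ i j : ℕ, IsThreshold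
        (colorClass (⊤ : SimpleGraph V) χ i ⊔ colorClass (⊤ : SimpleGraph V) χ j) := by
      intro i j
      refine ⟨?_, ?_, ?_⟩
      · rintro ⟨a, b, c, d, hac, had, hbc, hbd, Hab, Hcd, nac, nad, nbc, nbd⟩
        rw [unionAdj] at Hab Hcd nac nbd
        exact hn (keyPCC4 χ i j a b c d Hab.1 hac had hbc hbd Hcd.1 Hab.2 Hcd.2
          (fun h => nac ⟨hac, h⟩) (fun h => nbd ⟨hbd, h⟩))
      · rintro ⟨a, b, c, d, hac, had, hbd, Hab, Hbc, Hcd, nac, nad, nbd⟩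
        rw [unionAdj] at Hab Hbc Hcd nac nbd
        exact hn (keyPCC4 χ i j a b c d Hab.1 hac had Hbc.1 hbd Hcd.1 Hab.2 Hcd.2
          (fun h => nac ⟨hac, h⟩) (fun h => nbd ⟨hbd, h⟩))
      · rintro ⟨a, b, c, d, hac, hbd, Hab, Hbc, Hcd, Hda, nac, nbd⟩
        rw [unionAdj] at Hab Hbc Hcd Hda nac nbd
        exact hn (keyPCC4 χ i j a b c d Hab.1 hac Hda.1.symm Hbc.1 hbd Hcd.1 Hab.2 Hcd.2
          (fun h => nac ⟨hac, h⟩) (fun h => nbd ⟨hbd, h⟩))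
    refine ⟨fun i => ?_, main⟩
    have := main i i
    rwa [sup_idem] at this
  · rintro ⟨-, hth⟩ ⟨a, b, c, d, hac, hbd, hab, hbc, hcd, hda, c1, c2, c3, c4⟩
    rw [top_adj] at hab hbc hcd hda
    set p := χ s(a,b) with hp
    set r := χ s(c,d) with hr
    obtain ⟨T1, T2, T3⟩ := hth p r
    have nad : ¬(χ s(a,d) = p ∨ χ s(a,d) = r) := by
      rw [swapχ χ a d]
      rintro (h | h)
      · exact c4 h
      · exact c3 h.symm
    have nbc : ¬(χ s(b,c) = p ∨ χ s(b,c) = r) := by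
      rintro (h | h)
      · exact c1 h.symm
      · exact c2 h
    by_cases P : χ s(a,c) = p ∨ χ s(a,c) = r
    · by_cases Q : χ s(b,d) = p ∨ χ s(b,d) = r
      · -- induced C4 : a b d c
        refine T3 ⟨a, b, d, c, hda.symm, hbc, ?_, ?_, ?_, ?_, ?_, ?_⟩
        · exact (unionAdj χ p r a b).2 ⟨hab, Or.inl rfl⟩
        · exact (unionAdj χ p r b d).2 ⟨hbd, Q⟩
        · exact (unionAdj χ p r d c).2 ⟨fun h => hcd h.symm, by rw [← swapχ χ c d]; exact Or.inr rfl⟩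
        · exact (unionAdj χ p r c a).2 ⟨fun h => hac h.symm, by rw [← swapχ χ a c]; exact P⟩
        · rw [unionAdj]; rintro ⟨-, h⟩; exact nad h
        · rw [unionAdj]; rintro ⟨-, h⟩; exact nbc h
      · -- induced P4 : b a c d
        refine T2 ⟨b, a, c, d, hbc, hbd, hda.symm, ?_, ?_, ?_, ?_, ?_, ?_⟩
        · exact (unionAdj χ p r b a).2 ⟨hab.symm, by rw [← swapχ χ a b]; exact Or.inl rfl⟩
        · exact (unionAdj χ p r a c).2 ⟨hac, P⟩
        · exact (unionAdj χ p r c d).2 ⟨hcd, Or.inr rfl⟩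
        · rw [unionAdj]; rintro ⟨-, h⟩; exact nbc h
        · rw [unionAdj]; rintro ⟨-, h⟩; exact Q h
        · rw [unionAdj]; rintro ⟨-, h⟩; exact nad h
    · by_cases Q : χ s(b,d) = p ∨ χ s(b,d) = r
      · -- induced P4 : a b d c
        refine T2 ⟨a, b, d, c, hda.symm, hac, hbc, ?_, ?_, ?_, ?_, ?_, ?_⟩
        · exact (unionAdj χ p r a b).2 ⟨hab, Or.inl rfl⟩
        · exact (unionAdj χ p r b d).2 ⟨hbd, Q⟩
        · exact (unionAdj χ p r d c).2 ⟨fun h => hcd h.symm, by rw [← swapχ χ c d]; exact Or.inr rfl⟩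
        · rw [unionAdj]; rintro ⟨-, h⟩; exact nad h
        · rw [unionAdj]; rintro ⟨-, h⟩; exact P h
        · rw [unionAdj]; rintro ⟨-, h⟩; exact nbc h
      · -- induced 2K2 : ab, cd
        refine T1 ⟨a, b, c, d, hac, hda.symm, hbc, hbd, ?_, ?_, ?_, ?_, ?_, ?_⟩
        · exact (unionAdj χ p r a b).2 ⟨hab, Or.inl rfl⟩
        · exact (unionAdj χ p r c d).2 ⟨hcd, Or.inr rfl⟩
        · rw [unionAdj]; rintro ⟨-, h⟩; exact P h
        · rw [unionAdj]; rintro ⟨-, h⟩; exact nad h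
        · rw [unionAdj]; rintro ⟨-, h⟩; exact nbc h
        · rw [unionAdj]; rintro ⟨-, h⟩; exact Q h
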